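/- arXiv:math/0509023 — 7 statements merged into one kernel-verified Lean document; each statement's English description precedes it below -/
import Mathlib

section
/- Let n ≥ 2 and let a = (a_1, …, a_n) ∈ ℝ^n have components linearly independent over ℚ. Then the multiplier group M(a) is the underlying set of a subgroup of the multiplicative group of nonzero real numbers: every element of M(a) is nonzero, both 1 and −1 belong to M(a), and M(a) is closed under multiplication and under taking multiplicative inverses. -/
/-! `α ∈ M(a)` says that `a` is an eigenvector, with eigenvalue `α`, of a unimodular integer
matrix `B`. Since unimodular matrices form a group, `M(a)` contains `±1` and is closed under
products and (for `α ≠ 0`) inverses. If `α = 0`, each row of `B` gives a vanishing integer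
combination of the `aᵢ`, so ℚ-independence forces `B = 0`, contradicting `det B = ±1`. -/

open Matrix

/-- The multiplier set of a frequency vector `a`: the set of real numbers `α`
such that some integer matrix `B` of determinant `±1` satisfies `B · a = α • a`. -/
def MultSet {n : ℕ} (a : Fin n → ℝ) : Set ℝ :=
  {α : ℝ | ∃ B : Matrix (Fin n) (Fin n) ℤ,
    (B.det = 1 ∨ B.det = -1) ∧ ∀ i, α * a i = ∑ j, (B i j : ℝ) * a j}

/-- `a` is `F`-algebraic: for some nonzero `θ`, the numbers `θ * a i` lie in `F`
and form a `ℚ`-basis of `F`. -/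
def IsFAlgebraic {n : ℕ} (F : Subfield ℝ) (a : Fin n → ℝ) : Prop :=
  ∃ θ : ℝ, θ ≠ 0 ∧ ∃ bas : Module.Basis (Fin n) ℚ F, ∀ i, (bas i : ℝ) = θ * a i

/-- `MultSet a` is a finite-index subgroup of the unit group of the ring of
integers of `F`: every multiplier is a unit of `𝓞_F`, and finitely many units
`u i` suffice so that every unit of `𝓞_F` is some `u i` times a multiplier. -/
def MultSetFiniteIndexUnits {n : ℕ} (a : Fin n → ℝ) (F : Subfield ℝ) : Prop :=
  (∀ α ∈ MultSet a, ∃ u : (integralClosure ℤ F)ˣ,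
      (((u : integralClosure ℤ F) : F) : ℝ) = α) ∧
  ∃ m : ℕ, ∃ u : Fin m → (integralClosure ℤ F)ˣ,
    ∀ v : (integralClosure ℤ F)ˣ, ∃ i : Fin m, ∃ α ∈ MultSet a,
      (((v : integralClosure ℤ F) : F) : ℝ)
        = (((u i : integralClosure ℤ F) : F) : ℝ) * α


namespace Matrix

variable {ι K : Type*} [Fintype ι] [DecidableEq ι] [Field K] [CharZero K]

theorem eq_zero_of_intCast_mulVec_eq_zero {a : ι → K} (ha : LinearIndependent ℚ a)
    {B : Matrix ι ι ℤ} (hB : (Int.castRingHom K).mapMatrix B *ᵥ a = 0) : B = 0 := by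
  ext i j
  refine Fintype.linearIndependent_iff.mp (ha.restrict_scalars' ℤ) (B i) ?_ j
  simpa [mulVec, dotProduct, zsmul_eq_mul] using congrFun hB i

end Matrix

section MultSet

variable {n : ℕ} {a : Fin n → ℝ} {α β : ℝ}

theorem mem_multSet_iff : α ∈ MultSet a ↔
    ∃ B : Matrix (Fin n) (Fin n) ℤ, IsUnit B.det ∧ (Int.castRingHom ℝ).mapMatrix B *ᵥ a = α • a := by
  simp [MultSet, Int.isUnit_iff, funext_iff, mulVec, dotProduct, eq_comm]

theorem one_mem_multSet : (1 : ℝ) ∈ MultSet a :=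
  mem_multSet_iff.mpr ⟨1, by simp⟩

theorem neg_one_mem_multSet : (-1 : ℝ) ∈ MultSet a :=
  mem_multSet_iff.mpr ⟨-1, by simpa [det_neg] using isUnit_neg_one.pow n,
    by rw [map_neg, map_one, neg_mulVec, one_mulVec, neg_one_smul]⟩

theorem mul_mem_multSet (hα : α ∈ MultSet a) (hβ : β ∈ MultSet a) : α * β ∈ MultSet a := by
  obtain ⟨B, hBdet, hB⟩ := mem_multSet_iff.mp hα
  obtain ⟨C, hCdet, hC⟩ := mem_multSet_iff.mp hβ
  refine mem_multSet_iff.mpr ⟨B * C, by simpa [det_mul] using hBdet.mul hCdet, ?_⟩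
  rw [map_mul, ← mulVec_mulVec, hC, mulVec_smul, hB, smul_smul, mul_comm]

theorem inv_mem_multSet (hα₀ : α ≠ 0) (hα : α ∈ MultSet a) : α⁻¹ ∈ MultSet a := by
  obtain ⟨B, hBdet, hB⟩ := mem_multSet_iff.mp hα
  refine mem_multSet_iff.mpr ⟨B⁻¹, isUnit_nonsing_inv_det B hBdet, ?_⟩
  have hinv : (Int.castRingHom ℝ).mapMatrix B⁻¹ *ᵥ (α • a) = a := by
    rw [← hB, mulVec_mulVec, ← map_mul, nonsing_inv_mul B hBdet, map_one, one_mulVec]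
  rwa [mulVec_smul, ← eq_inv_smul_iff₀ hα₀] at hinv

theorem ne_zero_of_mem_multSet (hn : n ≠ 0) (ha : LinearIndependent ℚ a) (hα : α ∈ MultSet a) :
    α ≠ 0 := by
  rintro rfl
  obtain ⟨B, hBdet, hB⟩ := mem_multSet_iff.mp hα
  have : NeZero n := ⟨hn⟩
  have hB₀ : B = 0 := eq_zero_of_intCast_mulVec_eq_zero ha (by simpa using hB)
  rw [hB₀, det_zero] at hBdet
  exact not_isUnit_zero hBdet

end MultSet

/-- the multiplier set `M(a)` is (the underlying set of) a
subgroup of the multiplicative group of nonzero reals. -/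
theorem multSet_is_subgroup {n : ℕ} (hn : 2 ≤ n) (a : Fin n → ℝ)
    (ha : LinearIndependent ℚ a) :
    (∀ α ∈ MultSet a, α ≠ 0) ∧
    (1 : ℝ) ∈ MultSet a ∧ (-1 : ℝ) ∈ MultSet a ∧
    (∀ α ∈ MultSet a, ∀ β ∈ MultSet a, α * β ∈ MultSet a) ∧
    (∀ α ∈ MultSet a, α⁻¹ ∈ MultSet a) := by
  have hne : ∀ α ∈ MultSet a, α ≠ 0 := fun _ => ne_zero_of_mem_multSet (by omega) ha
  exact ⟨hne, one_mem_multSet, neg_one_mem_multSet, fun _ hα _ hβ => mul_mem_multSet hα hβ,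
    fun α hα => inv_mem_multSet (hne α hα) hα⟩
end

section
/- Let n ≥ 2 and let a = (a_1, …, a_n) ∈ ℝ^n have components linearly independent over ℚ. If M(a) = {1, −1}, then a is transcendental, i.e., a is not F-algebraic for any real algebraic number field F of degree n. -/
/-!
If `a` were `F`-algebraic, the `ℤ`-span `L` of the basis `θ a_i` would be a full lattice in the
real number field `F`. Having a real place and degree `n ≥ 2`, `F` has unit rank at least one, so
`𝓞_F` contains a unit `ε` of infinite order. Clearing denominators gives `N ≠ 0` with
`N 𝓞_F L ⊆ L`, hence every unit congruent to `1` modulo `N`, in particular some power `u = ε ^ t`,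
maps `L` onto itself. The matrix of multiplication by `u` in the basis is then an integer matrix of
determinant `±1`, so `u ∈ M(a) = {1, -1}`, and `ε ^ (2 t) = 1`: a contradiction.
-/

open Matrix

open Module Submodule NumberField

theorem exists_int_smul_mem_span_of_fg {V ι : Type*} [AddCommGroup V] [Module ℚ V] [Fintype ι]
    (b : Basis ι ℚ V) {M : Submodule ℤ V} (hM : M.FG) :
    ∃ N : ℤ, N ≠ 0 ∧ ∀ v ∈ M, N • v ∈ span ℤ (Set.range b) := by
  obtain ⟨s, rfl⟩ := hM
  obtain ⟨⟨N, hN⟩, hNs⟩ := IsLocalization.exist_integer_multiples (nonZeroDivisors ℤ)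
    (s ×ˢ Finset.univ) fun p : V × ι => b.repr p.1 p.2
  refine ⟨N, nonZeroDivisors.ne_zero hN, fun v hv => ?_⟩
  suffices span ℤ s ≤ (span ℤ (Set.range b)).comap (N • LinearMap.id) from this hv
  refine span_le.mpr fun w hw => (b.mem_span_iff_repr_mem ℤ _).mpr fun j => ?_
  simpa [map_zsmul, IsLocalization.IsInteger] using
    hNs (w, j) (Finset.mem_product.mpr ⟨hw, Finset.mem_univ j⟩)

theorem exists_int_matrix_of_mul_mem_span {K ι : Type*} [Ring K] [Algebra ℚ K] [Fintype ι]
    [DecidableEq ι] (b : Basis ι ℚ K) {x y : K} (hxy : x * y = 1)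
    (hx : ∀ v ∈ span ℤ (Set.range b), x * v ∈ span ℤ (Set.range b))
    (hy : ∀ v ∈ span ℤ (Set.range b), y * v ∈ span ℤ (Set.range b)) :
    ∃ B : Matrix ι ι ℤ, IsUnit B.det ∧ ∀ i, x * b i = ∑ j, B i j • b j := by
  set c := b.restrictScalars ℤ
  set f := (LinearMap.mulLeft ℤ x).restrict hx
  set g := (LinearMap.mulLeft ℤ y).restrict hy
  have hfg : f ∘ₗ g = LinearMap.id :=
    LinearMap.ext fun v => Subtype.ext (show x * (y * v) = v by rw [← mul_assoc, hxy, one_mul])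
  refine ⟨(LinearMap.toMatrix c c f)ᵀ, ?_, fun i => ?_⟩
  · rw [Matrix.det_transpose, LinearMap.det_toMatrix]
    exact IsUnit.of_mul_eq_one (LinearMap.det g)
      (by rw [← LinearMap.det_comp, hfg, LinearMap.det_id])
  · rw [← b.restrictScalars_apply ℤ i]
    change ((f (c i)) : K) = _
    rw [← c.sum_repr (f (c i))]
    simp only [Submodule.coe_sum, Submodule.coe_smul, Matrix.transpose_apply,
      LinearMap.toMatrix_apply, c, Basis.restrictScalars_apply]

namespace Ideal

variable {R : Type*} [CommRing R]

def congruenceUnits (I : Ideal R) : Subgroup Rˣ :=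
  (Units.map (Quotient.mk I : R →* R ⧸ I)).ker

theorem mem_congruenceUnits_iff {I : Ideal R} {u : Rˣ} :
    u ∈ I.congruenceUnits ↔ (u : R) - 1 ∈ I := by
  rw [congruenceUnits, MonoidHom.mem_ker, Units.ext_iff, ← Quotient.eq]
  rfl

theorem exists_pow_mem_congruenceUnits (I : Ideal R) [Finite (R ⧸ I)] (u : Rˣ) :
    ∃ t, 0 < t ∧ u ^ t ∈ I.congruenceUnits :=
  ⟨_, orderOf_pos (Units.map (Quotient.mk I : R →* R ⧸ I) u),
    by rw [congruenceUnits, MonoidHom.mem_ker, map_pow, pow_orderOf_eq_one]⟩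

theorem algebraMap_mul_mem_of_mem_congruenceUnits {A : Type*} [Ring A] [Algebra R A]
    {L : Submodule ℤ A} {N : ℤ} (hN : ∀ (x : R), ∀ v ∈ L, N • (algebraMap R A x * v) ∈ L)
    {w : Rˣ} (hw : w ∈ (span {(N : R)}).congruenceUnits) {v : A} (hv : v ∈ L) :
    algebraMap R A w * v ∈ L := by
  obtain ⟨x, hx⟩ := mem_span_singleton'.mp (mem_congruenceUnits_iff.mp hw)
  rw [eq_sub_iff_add_eq'] at hx
  have hwv : algebraMap R A w * v = v + N • (algebraMap R A x * v) := by
    rw [← hx, map_add, map_one, map_mul, map_intCast, add_mul, one_mul, mul_assoc, zsmul_eq_mul,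
      (Int.cast_commute N _).symm.left_comm v]
  rw [hwv]
  exact L.add_mem hv (hN x v hv)

end Ideal

namespace NumberField

variable {K : Type*} [Field K] [NumberField K]

theorem exists_int_smul_algebraMap_mul_mem_span {ι : Type*} [Fintype ι] (b : Basis ι ℚ K) :
    ∃ N : ℤ, N ≠ 0 ∧ ∀ (x : 𝓞 K), ∀ v ∈ span ℤ (Set.range b),
      N • (algebraMap (𝓞 K) K x * v) ∈ span ℤ (Set.range b) := by
  have hO := fg_range ((Algebra.linearMap (𝓞 K) K).restrictScalars ℤ)
  obtain ⟨N, hN, hNO⟩ := exists_int_smul_mem_span_of_fg b (hO.mul (fg_span (Set.finite_range b)))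
  exact ⟨N, hN, fun x v hv => hNO _ (mul_mem_mul ⟨x, rfl⟩ hv)⟩

theorem Units.rank_pos_of_ringHom_real (φ : K →+* ℝ) (hK : 2 ≤ finrank ℚ K) :
    0 < Units.rank K := by
  have hreal : InfinitePlace.nrRealPlaces K ≠ 0 := fun h0 => by
    have := nrRealPlaces_eq_zero_iff.mp h0
    have hℝ : ComplexEmbedding.IsReal Complex.ofRealHom := by ext; simp
    exact IsTotallyComplex.complexEmbedding_not_isReal _ (hℝ.comp φ)
  have := InfinitePlace.card_eq_nrRealPlaces_add_nrComplexPlaces K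
  have := InfinitePlace.card_add_two_mul_card_eq_rank K
  rw [Units.rank]
  omega

theorem Units.exists_not_isOfFinOrder (h : 0 < Units.rank K) :
    ∃ ε : (𝓞 K)ˣ, ¬IsOfFinOrder ε := by
  by_contra! hfin
  refine h.ne' ?_
  rw [← Units.finrank_eq, finrank_eq_zero_iff]
  intro x
  obtain ⟨t, ht, hxt⟩ := (hfin x.toMul).exists_pow_eq_one
  exact ⟨t, by omega, by simpa using congrArg Additive.ofMul hxt⟩

end NumberField

theorem coe_mem_multSet_of_mul_mem_span {n : ℕ} {F : Subfield ℝ} {a : Fin n → ℝ} {θ : ℝ}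
    (hθ : θ ≠ 0) (bas : Basis (Fin n) ℚ F) (hbas : ∀ i, (bas i : ℝ) = θ * a i) {x y : F}
    (hxy : x * y = 1) (hx : ∀ v ∈ span ℤ (Set.range bas), x * v ∈ span ℤ (Set.range bas))
    (hy : ∀ v ∈ span ℤ (Set.range bas), y * v ∈ span ℤ (Set.range bas)) :
    (x : ℝ) ∈ MultSet a := by
  obtain ⟨B, hB, hxB⟩ := exists_int_matrix_of_mul_mem_span bas hxy hx hy
  refine ⟨B, Int.isUnit_iff.mp hB, fun i => mul_left_cancel₀ hθ ?_⟩
  have h := congrArg ((↑) : F → ℝ) (hxB i)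
  simp only [Subfield.coe_mul, AddSubmonoidClass.coe_finsetSum, zsmul_eq_mul,
    SubringClass.coe_intCast, hbas] at h
  rw [Finset.mul_sum]
  convert h using 1
  · ring
  · exact Finset.sum_congr rfl fun j _ => by ring

theorem multSet_pm_one_imp_transcendental_general {n : ℕ} (hn : 2 ≤ n) (a : Fin n → ℝ)
    (hM : MultSet a = {1, -1}) :
    ∀ F : Subfield ℝ, Module.finrank ℚ F = n → ¬ IsFAlgebraic F a := by
  rintro F hF ⟨θ, hθ, bas, hbas⟩
  have : FiniteDimensional ℚ F := Module.finite_of_finrank_pos (by omega)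
  have : NumberField F := ⟨⟩
  obtain ⟨ε, hε⟩ :=
    Units.exists_not_isOfFinOrder (Units.rank_pos_of_ringHom_real F.subtype (by omega))
  obtain ⟨N, hN0, hN⟩ := exists_int_smul_algebraMap_mul_mem_span bas
  have : Finite (𝓞 F ⧸ Ideal.span {(N : 𝓞 F)}) :=
    Ring.HasFiniteQuotients.finiteQuotient (by simpa [Ideal.span_singleton_eq_bot] using hN0)
  obtain ⟨t, ht, hu⟩ := Ideal.exists_pow_mem_congruenceUnits (Ideal.span {(N : 𝓞 F)}) ε
  set u := ε ^ t
  have hu_inv : algebraMap (𝓞 F) F u * algebraMap (𝓞 F) F ↑u⁻¹ = 1 := by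
    rw [← map_mul, Units.mul_inv, map_one]
  have hmem := coe_mem_multSet_of_mul_mem_span hθ bas hbas hu_inv
    (fun _ => Ideal.algebraMap_mul_mem_of_mem_congruenceUnits hN hu)
    (fun _ => Ideal.algebraMap_mul_mem_of_mem_congruenceUnits hN (inv_mem hu))
  have hu_sq : ((algebraMap (𝓞 F) F u : F) : ℝ) ^ 2 = 1 := by
    rw [hM] at hmem
    rcases hmem with h | h <;> rw [h] <;> norm_num
  refine hε (isOfFinOrder_iff_pow_eq_one.mpr ⟨t * 2, by omega, Units.ext ?_⟩)
  apply FaithfulSMul.algebraMap_injective (𝓞 F) F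
  apply Subtype.val_injective
  simpa [u, pow_mul] using hu_sq

/-- if `M(a) = {1, -1}` then `a` is transcendental, i.e. not
`F`-algebraic for any real algebraic number field `F` of degree `n`. -/
theorem multSet_pm_one_imp_transcendental {n : ℕ} (hn : 2 ≤ n) (a : Fin n → ℝ)
    (ha : LinearIndependent ℚ a) (hM : MultSet a = {1, -1}) :
    ∀ F : Subfield ℝ, Module.finrank ℚ F = n → ¬ IsFAlgebraic F a :=
  multSet_pm_one_imp_transcendental_general hn a hM
end

section
/- Let a_1, a_2 ∈ ℝ be linearly independent over ℚ and set a = (a_1, a_2). If M(a) contains an element α with α ≠ 1 and α ≠ −1, then a_2/a_1 is a root of an irreducible quadratic polynomial with rational coefficients; equivalently, a_2/a_1 is algebraic over ℚ of degree exactly 2. -/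
open Matrix

open Polynomial

/-! A multiplier `α` comes with a unimodular integer matrix `B` having `(1, x)`, `x = a₂ / a₁`, as
an eigenvector with eigenvalue `α`. Comparing the two coordinates of `B (1, x) = α (1, x)` and
eliminating `α` shows that `x` is a root of the integer quadratic
`B₀₁ X² + (B₀₀ - B₁₁) X - B₁₀`. This polynomial vanishes only when `B` is scalar, and a
unimodular scalar matrix is `±1`, which would force `α = ±1`. Since `x` is irrational, its minimal
polynomial then has degree exactly `2`. -/

theorem exists_irreducible_degree_eq_two_of_aeval_eq_zero {K L : Type*} [Field K] [Field L]
    [Algebra K L] {x : L} (hx : x ∉ Set.range (algebraMap K L)) {p : K[X]} (hp : p ≠ 0)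
    (hdeg : p.natDegree ≤ 2) (hpx : aeval x p = 0) :
    ∃ q : K[X], Irreducible q ∧ q.degree = 2 ∧ aeval x q = 0 := by
  have hint : IsIntegral K x := IsAlgebraic.isIntegral ⟨p, hp, hpx⟩
  refine ⟨minpoly K x, minpoly.irreducible hint, ?_, minpoly.aeval K x⟩
  have hle : (minpoly K x).natDegree ≤ 2 :=
    (natDegree_le_of_dvd (minpoly.dvd K x hpx) hp).trans hdeg
  have hge : 2 ≤ (minpoly K x).natDegree := (minpoly.two_le_natDegree_iff hint).mpr hx
  rw [degree_eq_natDegree (minpoly.ne_zero hint), le_antisymm hle hge]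
  rfl

theorem div_notMem_range_algebraMap_of_linearIndependent {K L : Type*} [Field K] [Field L]
    [Algebra K L] {a b : L} (hab : LinearIndependent K ![a, b]) :
    b / a ∉ Set.range (algebraMap K L) := by
  rintro ⟨q, hq⟩
  have ha : a ≠ 0 := by simpa using hab.ne_zero 0
  have hcomb : q • a + (-1 : K) • b = 0 := by
    rw [Algebra.smul_def, hq, div_mul_cancel₀ b ha, neg_one_smul, add_neg_cancel]
  simpa using (LinearIndependent.pair_iff.mp hab q (-1) hcomb).2

theorem multSet_subset_multSet_smul {n : ℕ} (a : Fin n → ℝ) (c : ℝ) :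
    MultSet a ⊆ MultSet (c • a) := by
  rintro α ⟨B, hdet, hB⟩
  refine ⟨B, hdet, fun i => ?_⟩
  simp only [Pi.smul_apply, smul_eq_mul]
  rw [mul_left_comm, hB i, Finset.mul_sum]
  exact Finset.sum_congr rfl fun j _ => mul_left_comm _ _ _

theorem exists_matrix_of_mem_multSet_pair {a₁ a₂ α : ℝ} (ha₁ : a₁ ≠ 0)
    (hα : α ∈ MultSet ![a₁, a₂]) :
    ∃ B : Matrix (Fin 2) (Fin 2) ℤ, (B.det = 1 ∨ B.det = -1) ∧
      α = B 0 0 + B 0 1 * (a₂ / a₁) ∧ α * (a₂ / a₁) = B 1 0 + B 1 1 * (a₂ / a₁) := by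
  have hscale : a₁⁻¹ • ![a₁, a₂] = ![1, a₂ / a₁] := by
    ext i; fin_cases i <;> simp [inv_mul_cancel₀ ha₁, div_eq_inv_mul]
  obtain ⟨B, hdet, hB⟩ := hscale ▸ multSet_subset_multSet_smul _ a₁⁻¹ hα
  exact ⟨B, hdet, by simpa [Fin.sum_univ_two] using hB 0, by simpa [Fin.sum_univ_two] using hB 1⟩

/-- `x` is a root exactly when the line through `(1, x)` is invariant under `B`. -/
noncomputable def invariantSlopePolynomial (B : Matrix (Fin 2) (Fin 2) ℤ) : ℚ[X] :=
  C (B 0 1 : ℚ) * X ^ 2 + C ((B 0 0 : ℚ) - B 1 1) * X - C (B 1 0 : ℚ)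

section invariantSlopePolynomial

variable (B : Matrix (Fin 2) (Fin 2) ℤ)

theorem natDegree_invariantSlopePolynomial_le : (invariantSlopePolynomial B).natDegree ≤ 2 := by
  unfold invariantSlopePolynomial
  compute_degree

theorem aeval_invariantSlopePolynomial {α x : ℝ} (h₀ : α = B 0 0 + B 0 1 * x)
    (h₁ : α * x = B 1 0 + B 1 1 * x) : aeval x (invariantSlopePolynomial B) = 0 := by
  simp only [invariantSlopePolynomial, map_sub, map_add, map_mul, map_pow, aeval_C, aeval_X,
    eq_ratCast, Rat.cast_intCast]
  rw [h₀] at h₁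
  linear_combination h₁

theorem invariantSlopePolynomial_eq_zero_iff :
    invariantSlopePolynomial B = 0 ↔ B 0 1 = 0 ∧ B 1 0 = 0 ∧ B 0 0 = B 1 1 := by
  constructor
  · intro h
    have h₂ := congrArg (coeff · 2) h
    have h₁ := congrArg (coeff · 1) h
    have h₀ := congrArg (coeff · 0) h
    simp only [invariantSlopePolynomial, coeff_add, coeff_sub, coeff_C_mul, coeff_X_pow,
      coeff_X, coeff_C, coeff_zero] at h₀ h₁ h₂
    norm_num at h₀ h₁ h₂
    exact ⟨h₂, h₀, by exact_mod_cast sub_eq_zero.mp h₁⟩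
  · rintro ⟨h01, h10, h00⟩
    simp [invariantSlopePolynomial, h01, h10, h00]

theorem entry_eq_one_or_neg_one_of_invariantSlopePolynomial_eq_zero
    (h : invariantSlopePolynomial B = 0) (hdet : B.det = 1 ∨ B.det = -1) :
    B 0 0 = 1 ∨ B 0 0 = -1 := by
  obtain ⟨h01, h10, h00⟩ := (invariantSlopePolynomial_eq_zero_iff B).mp h
  rw [det_fin_two, h01, h10, ← h00, mul_zero, sub_zero] at hdet
  have hsq : B 0 0 * B 0 0 = 1 := hdet.resolve_right (by nlinarith)
  exact Int.isUnit_iff.mp (.of_mul_eq_one _ hsq)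

end invariantSlopePolynomial

/-- a multiplier other than `±1` forces the frequency ratio
`a₂/a₁` to be a root of an irreducible quadratic rational polynomial, i.e. to
be algebraic over `ℚ` of degree exactly `2`. -/
theorem ratio_root_irreducible_quadratic (a₁ a₂ : ℝ)
    (ha : LinearIndependent ℚ ![a₁, a₂])
    (α : ℝ) (hα : α ∈ MultSet ![a₁, a₂]) (h1 : α ≠ 1) (h2 : α ≠ -1) :
    ∃ p : Polynomial ℚ, Irreducible p ∧ p.degree = 2 ∧
      Polynomial.aeval (a₂ / a₁) p = 0 := by
  have ha₁ : a₁ ≠ 0 := by simpa using ha.ne_zero 0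
  obtain ⟨B, hdet, hα₀, hα₁⟩ := exists_matrix_of_mem_multSet_pair ha₁ hα
  refine exists_irreducible_degree_eq_two_of_aeval_eq_zero
    (div_notMem_range_algebraMap_of_linearIndependent ha) (fun h => ?_)
    (natDegree_invariantSlopePolynomial_le B) (aeval_invariantSlopePolynomial B hα₀ hα₁)
  rw [((invariantSlopePolynomial_eq_zero_iff B).mp h).1, Int.cast_zero, zero_mul, add_zero]
    at hα₀
  rcases entry_eq_one_or_neg_one_of_invariantSlopePolynomial_eq_zero B h hdet with h00 | h00
  · exact h1 (by rw [hα₀, h00, Int.cast_one])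
  · exact h2 (by rw [hα₀, h00, Int.cast_neg, Int.cast_one])
end

section
/- Let a_1, a_2 ∈ ℝ be linearly independent over ℚ, set a = (a_1, a_2), and suppose M(a) contains an element different from 1 and −1. Then the smallest subfield K = ℚ(a_2/a_1) of ℝ containing a_2/a_1 is a real algebraic number field of degree 2, and a is K-algebraic: with θ = 1/a_1, the numbers θa_1 = 1 and θa_2 = a_2/a_1 form a ℚ-basis of K. -/
/-!
Write `r = a₂ / a₁`, which is irrational since `a₁, a₂` are independent over `ℚ`. If
`α a = B a` with `B ∈ GL₂(ℤ)`, eliminating `α` from the two rows gives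
`B₀₁ r² + (B₀₀ - B₁₁) r - B₁₀ = 0`. This relation is trivial only for a scalar matrix
`B = ±1`, i.e. for `α = ±1`. Hence `r` is a quadratic irrational, and `1, r` is the power basis
of `ℚ(r)`.
-/

open Matrix

open Polynomial IntermediateField

theorem Subfield.closure_singleton_eq_toSubfield_adjoin {E : Type*} [Field E] [CharZero E]
    (x : E) : Subfield.closure {x} = (ℚ⟮x⟯).toSubfield := by
  refine le_antisymm (Subfield.closure_le.mpr ?_) ?_
  · exact Set.singleton_subset_iff.mpr (mem_adjoin_simple_self ℚ x)
  rw [adjoin_toSubfield, Subfield.closure_le, Set.union_subset_iff]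
  refine ⟨?_, Subfield.subset_closure⟩
  rintro _ ⟨q, rfl⟩
  rw [eq_ratCast]
  exact SubfieldClass.ratCast_mem _ q

theorem exists_basis_closure_singleton_eq_pow {E : Type*} [Field E] [CharZero E] {x : E}
    (hx : IsIntegral ℚ x) :
    ∃ b : Module.Basis (Fin (minpoly ℚ x).natDegree) ℚ (Subfield.closure {x}),
      ∀ i, (b i : E) = x ^ (i : ℕ) := by
  rw [Subfield.closure_singleton_eq_toSubfield_adjoin]
  let b : Module.Basis (Fin (minpoly ℚ x).natDegree) ℚ ℚ⟮x⟯ :=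
    (adjoin.powerBasis hx).basis.reindex (finCongr (adjoin.powerBasis_dim hx))
  refine ⟨b, fun i => ?_⟩
  change ((b i : ℚ⟮x⟯) : E) = _
  simp [b, adjoin.powerBasis_gen]

theorem minpoly.natDegree_eq_two_of_aeval_eq_zero {K E : Type*} [Field K] [Ring E] [Nontrivial E]
    [Algebra K E] {x : E} {p : K[X]} (hp : p ≠ 0) (hdeg : p.natDegree ≤ 2)
    (hx : Polynomial.aeval x p = 0) (hxK : x ∉ (algebraMap K E).range) :
    IsIntegral K x ∧ (minpoly K x).natDegree = 2 := by
  have hint : IsIntegral K x := isAlgebraic_iff_isIntegral.mp ⟨p, hp, hx⟩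
  refine ⟨hint, le_antisymm ?_ ((minpoly.two_le_natDegree_iff hint).mpr hxK)⟩
  exact (natDegree_le_natDegree (minpoly.degree_le_of_ne_zero K x hp hx)).trans hdeg

theorem LinearIndependent.irrational_div {a₁ a₂ : ℝ} (ha : LinearIndependent ℚ ![a₁, a₂]) :
    Irrational (a₂ / a₁) := by
  rintro ⟨q, hq⟩
  have ha₁ : a₁ ≠ 0 := by simpa using ha.ne_zero 0
  have hrel : q • a₁ + (-1 : ℚ) • a₂ = 0 := by
    rw [Rat.smul_def, Rat.smul_def, hq, div_mul_cancel₀ a₂ ha₁]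
    simp
  exact absurd (LinearIndependent.pair_iff.mp ha q (-1) hrel).2 (by norm_num)

theorem exists_quadratic_of_mem_multSet {a₁ a₂ α : ℝ} (hα : α ∈ MultSet ![a₁, a₂])
    (hα₁ : α ≠ 1) (hα₂ : α ≠ -1) (ha₁ : a₁ ≠ 0) :
    ∃ p : ℚ[X], p ≠ 0 ∧ p.natDegree ≤ 2 ∧ aeval (a₂ / a₁) p = 0 := by
  obtain ⟨B, hdet, hB⟩ := hα
  have h₀ := hB 0
  have h₁ := hB 1
  simp only [Fin.sum_univ_two, cons_val_zero, cons_val_one] at h₀ h₁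
  rw [det_fin_two] at hdet
  refine ⟨C (B 0 1 : ℚ) * X ^ 2 + C ((B 0 0 : ℚ) - B 1 1) * X - C (B 1 0 : ℚ), ?_, ?_, ?_⟩
  · intro hp
    have c₂ := congrArg (coeff · 2) hp
    have c₁ := congrArg (coeff · 1) hp
    have c₀ := congrArg (coeff · 0) hp
    simp only [coeff_sub, coeff_add, coeff_C_mul, coeff_X_pow, coeff_X, coeff_C,
      coeff_zero] at c₂ c₁ c₀
    norm_num at c₂ c₁ c₀
    have hdiag : B 1 1 = B 0 0 := by exact_mod_cast (sub_eq_zero.mp c₁).symm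
    rw [c₂, c₀, hdiag, zero_mul, sub_zero] at hdet
    rw [c₂, Int.cast_zero, zero_mul, add_zero] at h₀
    have hα : α = B 0 0 := mul_right_cancel₀ ha₁ h₀
    rcases Int.isUnit_iff.mp (isUnit_of_mul_isUnit_left (Int.isUnit_iff.mpr hdet)) with h | h
    · exact hα₁ (by rw [hα, h, Int.cast_one])
    · exact hα₂ (by rw [hα, h, Int.cast_neg, Int.cast_one])
  · compute_degree
  · simp only [map_intCast, map_sub, map_add, map_mul, map_pow, aeval_X]
    field_simp
    linear_combination a₁ * h₁ - a₂ * h₀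

/-- a multiplier other than `±1` makes `a` algebraic over the
real quadratic number field `K = ℚ(a₂/a₁)`, with `θ = 1/a₁`: the numbers
`θa₁ = 1` and `θa₂ = a₂/a₁` form a `ℚ`-basis of `K`. -/
theorem Kalgebraic_of_nontrivial_multiplier (a₁ a₂ : ℝ)
    (ha : LinearIndependent ℚ ![a₁, a₂])
    (hM : ∃ α ∈ MultSet ![a₁, a₂], α ≠ 1 ∧ α ≠ -1) :
    Module.finrank ℚ (Subfield.closure {a₂ / a₁} : Subfield ℝ) = 2 ∧
    ∃ bas : Module.Basis (Fin 2) ℚ (Subfield.closure {a₂ / a₁} : Subfield ℝ),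
      (bas 0 : ℝ) = (1 / a₁) * a₁ ∧ (bas 1 : ℝ) = (1 / a₁) * a₂ := by
  obtain ⟨α, hα, hα₁, hα₂⟩ := hM
  have ha₁ : a₁ ≠ 0 := by simpa using ha.ne_zero 0
  obtain ⟨p, hp, hdeg, hroot⟩ := exists_quadratic_of_mem_multSet hα hα₁ hα₂ ha₁
  have hirr : a₂ / a₁ ∉ (algebraMap ℚ ℝ).range := by
    simpa [Irrational] using ha.irrational_div
  obtain ⟨hint, hquad⟩ := minpoly.natDegree_eq_two_of_aeval_eq_zero hp hdeg hroot hirr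
  obtain ⟨b, hb⟩ := exists_basis_closure_singleton_eq_pow hint
  let bas := b.reindex (finCongr hquad)
  refine ⟨by rw [Module.finrank_eq_card_basis bas, Fintype.card_fin], bas, ?_, ?_⟩
  · simp [bas, hb, ha₁]
  · simp [bas, hb, div_eq_inv_mul]
end

section
/- Let a_1, a_2 ∈ ℝ be linearly independent over ℚ, set a = (a_1, a_2), and let F be a real algebraic number field of degree 2. If M(a) is a finite-index subgroup of 𝓞_F^×, then a is F-algebraic. -/
/-!
A subfield of `ℝ` of degree `2` is a real quadratic field, so by Dirichlet's unit theorem its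
unit group is infinite. Finitely many translates of `M(a)` cover it, hence `M(a)` contains some
`α ≠ ±1`. Linear independence of `a₁, a₂` forces the matrix of an integer multiplier `k` to
be `k • 1`, so `k = ±1`; hence the first row of the matrix of `α`, `α a₁ = b₀₀ a₁ + b₀₁ a₂`,
has `b₀₁ ≠ 0`. Thus `a₂ / a₁ = (α - b₀₀) / b₀₁ ∈ F`, and
`θ = a₁⁻¹` scales `a` to the `ℚ`-basis `(1, a₂ / a₁)` of `F`.
-/

open Matrix NumberField NumberField.InfinitePlace

theorem NumberField.Units.infinite_of_nontrivial_infinitePlace (K : Type*) [Field K]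
    [NumberField K] [Nontrivial (InfinitePlace K)] : Infinite (𝓞 K)ˣ := by
  obtain ⟨w₁⟩ : Nonempty (InfinitePlace K) := inferInstance
  obtain ⟨w, hw⟩ := exists_ne w₁
  obtain ⟨u, hu⟩ := Units.dirichletUnitTheorem.exists_unit (K := K) w₁
  by_contra hfin
  have : Finite (𝓞 K)ˣ := not_infinite_iff_finite.mp hfin
  -- in a finite group `u` would be torsion, so of absolute value `1` at every place
  have hu1 : w u = 1 := (Units.mem_torsion K).mp (isOfFinOrder_of_finite u) w
  simpa [hu1] using hu w hw

theorem NumberField.one_lt_card_infinitePlace_of_isReal {K : Type*} [Field K] [NumberField K]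
    {w : InfinitePlace K} (hw : IsReal w) (hK : 2 ≤ Module.finrank ℚ K) :
    1 < Fintype.card (InfinitePlace K) := by
  classical
  have hreal : 0 < nrRealPlaces K := Fintype.card_pos_iff.mpr ⟨⟨w, hw⟩⟩
  have := card_add_two_mul_card_eq_rank K
  rw [card_eq_nrRealPlaces_add_nrComplexPlaces]
  omega

theorem Subfield.isReal_mk_subtype (F : Subfield ℝ) [NumberField F] :
    IsReal (InfinitePlace.mk (Complex.ofRealHom.comp F.subtype)) :=
  isReal_mk_iff.mpr (ComplexEmbedding.IsReal.comp _ (by ext; simp))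

theorem Subfield.infinite_units_of_two_le_finrank (F : Subfield ℝ) [NumberField F]
    (hF : 2 ≤ Module.finrank ℚ F) : Infinite (𝓞 F)ˣ :=
  have : Nontrivial (InfinitePlace F) := Fintype.one_lt_card_iff_nontrivial.mp
    (one_lt_card_infinitePlace_of_isReal F.isReal_mk_subtype hF)
  Units.infinite_of_nontrivial_infinitePlace F

theorem finite_of_injective_of_forall_eq_mul {G ι R : Type*} [Finite ι] [Mul R] {f : G → R}
    (hf : Function.Injective f) {S : Set R} (hS : S.Finite) (u : ι → G)
    (hcover : ∀ v, ∃ i, ∃ α ∈ S, f v = f (u i) * α) : Finite G := by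
  have hrange : Set.range f ⊆ ⋃ i, (f (u i) * ·) '' S := by
    rintro _ ⟨v, rfl⟩
    obtain ⟨i, α, hα, hv⟩ := hcover v
    exact Set.mem_iUnion.mpr ⟨i, α, hα, hv.symm⟩
  exact (Set.finite_range_iff hf).mp
    ((Set.finite_iUnion fun i => hS.image (f (u i) * ·)).subset hrange)

theorem eq_one_or_neg_one_of_intCast_mem_multSet {n : ℕ} {a : Fin n → ℝ}
    (ha : LinearIndependent ℚ a) (hn : n ≠ 0) {k : ℤ} (hk : (k : ℝ) ∈ MultSet a) :
    k = 1 ∨ k = -1 := by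
  obtain ⟨B, hdet, hB⟩ := hk
  have hscalar : B = diagonal fun _ => k := by
    ext i j
    have hsum : ∑ j, (B i j - diagonal (fun _ => k) i j) • a j = 0 := by
      simp [sub_smul, zsmul_eq_mul, ← hB i, diagonal_apply]
    exact sub_eq_zero.mp (Fintype.linearIndependent_iff.mp (ha.restrict_scalars' ℤ) _ hsum j)
  rw [hscalar, det_diagonal, Finset.prod_const, Finset.card_univ, Fintype.card_fin] at hdet
  exact Int.isUnit_iff.mp ((isUnit_pow_iff hn).mp (Int.isUnit_iff.mpr hdet))

theorem exists_mem_multSet_ne_one_ne_neg_one {n : ℕ} {a : Fin n → ℝ} {F : Subfield ℝ}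
    (hinf : Infinite (integralClosure ℤ F)ˣ) (h : MultSetFiniteIndexUnits a F) :
    ∃ α ∈ MultSet a, α ≠ 1 ∧ α ≠ -1 := by
  obtain ⟨-, _, u, hcover⟩ := h
  by_contra! hpm
  have hS : (MultSet a).Finite :=
    (Set.toFinite {1, -1}).subset fun α hα => or_iff_not_imp_left.mpr (hpm α hα)
  exact not_finite_iff_infinite.mpr hinf <| finite_of_injective_of_forall_eq_mul
    (fun v w hvw => Units.ext (Subtype.ext (Subtype.ext hvw))) hS u hcover

theorem div_mem_of_mem_multSet {a₁ a₂ : ℝ} (ha : LinearIndependent ℚ ![a₁, a₂])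
    {F : Subfield ℝ} {α : ℝ} (hαM : α ∈ MultSet ![a₁, a₂]) (hαF : α ∈ F) (hα₁ : α ≠ 1)
    (hα₂ : α ≠ -1) : a₂ / a₁ ∈ F := by
  obtain ⟨B, -, hB⟩ := id hαM
  have h₀ : α * a₁ = B 0 0 * a₁ + B 0 1 * a₂ := by simpa [Fin.sum_univ_two] using hB 0
  have ha₁ : a₁ ≠ 0 := by simpa using ha.ne_zero 0
  -- otherwise `α = B 0 0` would be an integer multiplier, hence `±1`
  have hB₀₁ : (B 0 1 : ℝ) ≠ 0 := by
    intro h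
    have hα : α = B 0 0 := mul_right_cancel₀ ha₁ (by simpa [h] using h₀)
    rcases eq_one_or_neg_one_of_intCast_mem_multSet ha two_ne_zero (hα ▸ hαM) with h | h <;>
      simp_all
  have hratio : a₂ / a₁ = (α - B 0 0) / B 0 1 := by
    field_simp
    linarith
  rw [hratio]
  exact F.div_mem (F.sub_mem hαF (F.intCast_mem _)) (F.intCast_mem _)

theorem isFAlgebraic_of_mul_mem {n : ℕ} {F : Subfield ℝ} [FiniteDimensional ℚ F]
    {a : Fin n → ℝ} (ha : LinearIndependent ℚ a) (hF : Module.finrank ℚ F = n) {θ : ℝ}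
    (hθ : θ ≠ 0) (hmem : ∀ i, θ * a i ∈ F) : IsFAlgebraic F a := by
  let v : Fin n → F := fun i => ⟨θ * a i, hmem i⟩
  have hv : LinearIndependent ℚ v := by
    apply LinearIndependent.of_comp F.subtype.toRatAlgHom.toLinearMap
    exact ha.map' (LinearMap.mulLeft ℚ θ) (LinearMap.ker_eq_bot.mpr (mul_right_injective₀ hθ))
  exact ⟨θ, hθ, basisOfLinearIndependentOfCardEqFinrank' v hv (by simp [hF]), fun i => by simp [v]⟩

/-- on `T²`, if `M(a)` is a finite-index subgroup of `𝓞_F^×`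
then `a` is `F`-algebraic. -/
theorem finiteIndex_imp_falgebraic (a₁ a₂ : ℝ)
    (ha : LinearIndependent ℚ ![a₁, a₂]) (F : Subfield ℝ)
    (hF : Module.finrank ℚ F = 2)
    (h : MultSetFiniteIndexUnits ![a₁, a₂] F) :
    IsFAlgebraic F ![a₁, a₂] := by
  have : FiniteDimensional ℚ F := Module.finite_of_finrank_eq_succ hF
  have : NumberField F := ⟨⟩
  obtain ⟨α, hαM, hα₁, hα₂⟩ :=
    exists_mem_multSet_ne_one_ne_neg_one (F.infinite_units_of_two_le_finrank hF.ge) h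
  obtain ⟨u, hu⟩ := h.1 α hαM
  have hdiv : a₂ / a₁ ∈ F := div_mem_of_mem_multSet ha hαM (hu ▸ (u : F).2) hα₁ hα₂
  have ha₁ : a₁ ≠ 0 := by simpa using ha.ne_zero 0
  refine isFAlgebraic_of_mul_mem ha hF (inv_ne_zero ha₁) fun i => ?_
  fin_cases i
  · simp [ha₁, F.one_mem]
  · simpa [div_eq_inv_mul] using hdiv
end

section
/- Let a = (1, 4√3) ∈ ℝ². Then 1 and 4√3 are linearly independent over ℚ, (2+√3)² = 7+4√3 belongs to M(a) (witnessed by the integer matrix [[7, 1], [48, 7]], which has determinant 1), 2+√3 does not belong to M(a), and in fact M(a) = {ε·(2+√3)^{2k} : ε ∈ {1, −1}, k ∈ ℤ}. -/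
/-!
If an integer matrix `B` satisfies `B (1, r) = α (1, r)` with `r = 4√3 = √48`, comparing
coefficients of the ℚ-independent numbers `1, r` forces `B = [[p, q], [48q, p]]` and
`α = p + q r`, with `det B = p² - 48 q² = ±1`; the sign `-1` is impossible modulo `3`.
So the multipliers are the images of the solutions of the Pell equation `x² - 48 y² = 1`.
Its fundamental solution is `(7, 1)`, since `x² = 1 + 48 y² ≥ 49` as soon as `y ≠ 0`, hence
the multipliers are `±(7 + 4√3)^k = ±(2 + √3)^(2k)`. The number `2 + √3 = 2 + r/4` is not
of the form `p + q r`.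
-/

open Matrix

theorem Irrational.linearIndependent_one {r : ℝ} (hr : Irrational r) :
    LinearIndependent ℚ ![1, r] :=
  (LinearIndependent.pair_iff' one_ne_zero).2 fun a h => hr ⟨a, by simpa using h⟩

theorem Irrational.eq_and_eq_of_intCast_add_mul_eq {r : ℝ} (hr : Irrational r) {a b c e : ℤ}
    (h : a + b * r = c + e * r) : a = c ∧ b = e := by
  have hind := hr.linearIndependent_one.restrict_scalars' ℤ
  have := LinearIndependent.pair_iff.1 hind (a - c) (b - e)
    (by simp only [zsmul_eq_mul]; push_cast; linear_combination h)
  omega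

theorem mem_multSet_one_iff {d : ℤ} {r : ℝ} (hr : r * r = d) (hirr : Irrational r) {x : ℝ} :
    x ∈ MultSet ![1, r] ↔
      ∃ p q : ℤ, (p ^ 2 - d * q ^ 2 = 1 ∨ p ^ 2 - d * q ^ 2 = -1) ∧ x = p + q * r := by
  constructor
  · rintro ⟨B, hdet, hB⟩
    have h0 := hB 0
    have h1 := hB 1
    simp only [Fin.sum_univ_two, Matrix.cons_val_zero, Matrix.cons_val_one, mul_one] at h0 h1
    obtain ⟨h10, h11⟩ := hirr.eq_and_eq_of_intCast_add_mul_eq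
      (a := B 1 0) (b := B 1 1) (c := d * B 0 1) (e := B 0 0) (by
        push_cast; linear_combination -h1 + r * h0 + (B 0 1 : ℝ) * hr)
    rw [Matrix.det_fin_two, h10, h11] at hdet
    exact ⟨B 0 0, B 0 1, by convert hdet using 2 <;> ring, h0⟩
  · rintro ⟨p, q, hpq, rfl⟩
    refine ⟨!![p, q; d * q, p], by rw [Matrix.det_fin_two_of]; convert hpq using 2 <;> ring, ?_⟩
    intro i
    fin_cases i
    · simp [Fin.sum_univ_two]
    · simp [Fin.sum_univ_two]
      linear_combination (q : ℝ) * hr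

namespace Pell.Solution₁

variable {d : ℤ} {R : Type*} [CommRing R]

def liftUnits (r : R) (hr : r * r = d) : Solution₁ d →* Rˣ :=
  (Units.map (Zsqrtd.lift ⟨r, hr⟩ : ℤ√d →* R)).comp Unitary.toUnits

@[simp]
theorem coe_liftUnits (r : R) (hr : r * r = d) (a : Solution₁ d) :
    (liftUnits r hr a : R) = a.x + a.y * r := rfl

theorem coe_liftUnits_neg (r : R) (hr : r * r = d) (a : Solution₁ d) :
    (liftUnits r hr (-a) : R) = -liftUnits r hr a := by
  simp only [coe_liftUnits, x_neg, y_neg, Int.cast_neg]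
  ring

theorem coe_liftUnits_zpow {K : Type*} [Field K] (r : K) (hr : r * r = d) (a : Solution₁ d)
    (n : ℤ) :
    (liftUnits r hr (a ^ n) : K) = (liftUnits r hr a : K) ^ n := by
  rw [map_zpow, Units.val_zpow_eq_zpow_val]

end Pell.Solution₁

open Pell Solution₁

theorem Pell.IsFundamental.range_coe_liftUnits {d : ℤ} {K : Type*} [Field K]
    {a₁ : Solution₁ d} (h : IsFundamental a₁) (r : K) (hr : r * r = d) :
    Set.range (fun a => (liftUnits r hr a : K)) =
      {x | ∃ ε : K, (ε = 1 ∨ ε = -1) ∧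
        ∃ k : ℤ, x = ε * (liftUnits r hr a₁ : K) ^ k} := by
  have hpos (k : ℤ) : (liftUnits r hr (a₁ ^ k) : K) = 1 * (liftUnits r hr a₁ : K) ^ k := by
    rw [coe_liftUnits_zpow, one_mul]
  have hneg (k : ℤ) : (liftUnits r hr (-a₁ ^ k) : K) = -1 * (liftUnits r hr a₁ : K) ^ k := by
    rw [coe_liftUnits_neg, coe_liftUnits_zpow, neg_one_mul]
  ext x
  constructor
  · rintro ⟨a, rfl⟩
    obtain ⟨k, rfl | rfl⟩ := h.eq_zpow_or_neg_zpow a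
    exacts [⟨1, .inl rfl, k, hpos k⟩, ⟨-1, .inr rfl, k, hneg k⟩]
  · rintro ⟨ε, rfl | rfl, k, rfl⟩
    exacts [⟨a₁ ^ k, hpos k⟩, ⟨-a₁ ^ k, hneg k⟩]

theorem four_mul_sqrt_three_mul_self : 4 * √3 * (4 * √3) = ((48 : ℤ) : ℝ) := by
  push_cast
  linear_combination 16 * Real.mul_self_sqrt (show (0 : ℝ) ≤ 3 by norm_num)

theorem irrational_sqrt_three : Irrational √3 := by
  simpa using Nat.prime_three.irrational_sqrt

theorem sq_sub_forty_eight_mul_sq_ne_neg_one (p q : ℤ) : p ^ 2 - 48 * q ^ 2 ≠ -1 := by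
  intro h
  have h3 := congrArg (Int.cast : ℤ → ZMod 3) h
  push_cast at h3
  generalize (p : ZMod 3) = a at h3
  generalize (q : ZMod 3) = b at h3
  revert a b
  decide

theorem multSet_one_four_mul_sqrt_three :
    MultSet ![1, 4 * √3] =
      Set.range (fun a : Solution₁ 48 => (liftUnits _ four_mul_sqrt_three_mul_self a : ℝ)) := by
  ext x
  rw [mem_multSet_one_iff four_mul_sqrt_three_mul_self
    (irrational_sqrt_three.natCast_mul four_ne_zero)]
  constructor
  · rintro ⟨p, q, hpq | hpq, rfl⟩
    · exact ⟨mk p q hpq, by simp⟩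
    · exact absurd hpq (sq_sub_forty_eight_mul_sq_ne_neg_one p q)
  · rintro ⟨a, rfl⟩
    exact ⟨a.x, a.y, .inl a.prop, rfl⟩

theorem isFundamental_seven_one : IsFundamental (mk 7 1 (by norm_num) : Solution₁ 48) := by
  refine ⟨by simp, by simp, fun {b} hb => ?_⟩
  have hy := y_ne_zero_of_one_lt_x hb
  have hb_pell := b.prop
  simp only [x_mk]
  nlinarith [sq_nonneg b.y, Int.one_le_abs hy, sq_abs b.y]

theorem two_add_sqrt_three_sq : (2 + √3) ^ 2 = 7 + 4 * √3 := by
  linear_combination Real.sq_sqrt (show (0 : ℝ) ≤ 3 by norm_num)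

/-- for `a = (1, 4√3)`: the components are `ℚ`-linearly
independent, `(2+√3)²` is a multiplier (witnessed by `[[7,1],[48,7]]` of
determinant `1`), `2+√3` is not, and
`M(a) = {±(2+√3)^(2k) : k ∈ ℤ}`. -/
theorem sqrt3_flow_example :
    LinearIndependent ℚ ![(1 : ℝ), 4 * Real.sqrt 3] ∧
    ((!![7, 1; 48, 7] : Matrix (Fin 2) (Fin 2) ℤ).det = 1 ∧
      ∀ i, (2 + Real.sqrt 3) ^ 2 * (![(1 : ℝ), 4 * Real.sqrt 3]) i
        = ∑ j, ((!![7, 1; 48, 7] : Matrix (Fin 2) (Fin 2) ℤ) i j : ℝ)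
            * (![(1 : ℝ), 4 * Real.sqrt 3]) j) ∧
    (2 + Real.sqrt 3) ^ 2 ∈ MultSet ![(1 : ℝ), 4 * Real.sqrt 3] ∧
    (2 + Real.sqrt 3) ∉ MultSet ![(1 : ℝ), 4 * Real.sqrt 3] ∧
    MultSet ![(1 : ℝ), 4 * Real.sqrt 3]
      = {x : ℝ | ∃ ε : ℝ, (ε = 1 ∨ ε = -1) ∧
          ∃ k : ℤ, x = ε * (2 + Real.sqrt 3) ^ (2 * k)} := by
  have hirr : Irrational (4 * √3) := irrational_sqrt_three.natCast_mul four_ne_zero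
  have hmatrix : (!![7, 1; 48, 7] : Matrix (Fin 2) (Fin 2) ℤ).det = 1 ∧
      ∀ i, (2 + √3) ^ 2 * (![(1 : ℝ), 4 * √3]) i
        = ∑ j, ((!![7, 1; 48, 7] : Matrix (Fin 2) (Fin 2) ℤ) i j : ℝ)
            * (![(1 : ℝ), 4 * √3]) j := by
    refine ⟨by simp [Matrix.det_fin_two_of], fun i => ?_⟩
    fin_cases i
    · simp [Fin.sum_univ_two, two_add_sqrt_three_sq]
    · simp [Fin.sum_univ_two, two_add_sqrt_three_sq]
      linear_combination four_mul_sqrt_three_mul_self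
  refine ⟨hirr.linearIndependent_one, hmatrix, ⟨_, .inl hmatrix.1, hmatrix.2⟩, ?_, ?_⟩
  · rw [mem_multSet_one_iff four_mul_sqrt_three_mul_self hirr]
    rintro ⟨p, q, -, h⟩
    have hcoeffs := irrational_sqrt_three.eq_and_eq_of_intCast_add_mul_eq (a := 2) (b := 1)
      (c := p) (e := 4 * q) (by push_cast; linear_combination h)
    omega
  · have hgen : (liftUnits _ four_mul_sqrt_three_mul_self (mk 7 1 (by norm_num)) : ℝ) =
        (2 + √3) ^ 2 := by
      simp [two_add_sqrt_three_sq]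
    rw [multSet_one_four_mul_sqrt_three, isFundamental_seven_one.range_coe_liftUnits, hgen]
    simp only [_root_.zpow_mul, zpow_ofNat]
end

section
/- Let a = (1, 4√3) ∈ ℝ² and d = (4, 60√3) ∈ ℝ², so that d = C·a for the integer matrix C = [[4, 0], [0, 15]] of nonzero determinant. Then (2+√3)³ belongs to M(d) (witnessed by the integer matrix [[26, 1], [675, 26]], which has determinant 1), neither 2+√3 nor (2+√3)² belongs to M(d), in fact M(d) = {ε·(2+√3)^{3k} : ε ∈ {1, −1}, k ∈ ℤ}, and (2+√3)³ does not belong to M(a); consequently M(d) is not a subset of M(a). -/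
open Matrix

/-! Multipliers do not change under scaling, so `M(d) = M(1, ω)` with `ω = 15√3`. As `ω` is
irrational with `ω² = 675`, comparing coefficients of `1` and `ω` forces a matrix with
`B (1, ω) = α (1, ω)` to be `[[x, y], [675y, x]]` with `α = x + yω`, so `M(d)` consists of the
`x + yω` with `x² - 675y² = ±1`. The sign `-1` is impossible modulo `3`, and `(26, 1)` is the
fundamental solution of `x² - 675y² = 1`, with `26 + ω = (2 + √3)³`. Every multiplier of `a`
has the form `x + 4y√3`, which `26 + 15√3` is not. -/

theorem Irrational.intCast_add_mul_inj {r : ℝ} (hr : Irrational r) {p q p' q' : ℤ}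
    (h : (p : ℝ) + q * r = p' + q' * r) : p = p' ∧ q = q' := by
  obtain rfl : q = q' := by
    by_contra hq
    refine (hr.intCast_mul (sub_ne_zero.mpr hq)).ne_int (p' - p) ?_
    push_cast
    linear_combination h
  exact ⟨by exact_mod_cast add_right_cancel h, rfl⟩

theorem Int.sq_sub_mul_sq_ne_neg_one_of_three_dvd {D : ℤ} (hD : 3 ∣ D) (x y : ℤ) :
    x ^ 2 - D * y ^ 2 ≠ -1 := by
  intro h
  have h3 : (x : ZMod 3) ^ 2 = -1 := by
    simpa [(ZMod.intCast_zmod_eq_zero_iff_dvd D 3).mpr hD] using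
      congrArg (Int.cast : ℤ → ZMod 3) h
  generalize (x : ZMod 3) = u at h3
  revert u; decide

theorem multSet_smul {n : ℕ} {c : ℝ} (hc : c ≠ 0) (a : Fin n → ℝ) :
    MultSet (c • a) = MultSet a := by
  ext α
  refine exists_congr fun B => and_congr_right fun _ => forall_congr' fun i => ?_
  simp only [Pi.smul_apply, smul_eq_mul, mul_left_comm _ c, ← Finset.mul_sum]
  exact mul_right_inj' hc

theorem dvd_of_intCast_add_mul_mem_multSet {r : ℝ} (hr : Irrational r) {c p q : ℤ}
    (h : (p + q * r : ℝ) ∈ MultSet ![1, c * r]) : c ∣ q := by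
  obtain ⟨B, -, hB⟩ := h
  have h0 := hB 0
  simp only [Fin.sum_univ_two, cons_val_zero, cons_val_one, mul_one] at h0
  have : (p : ℝ) + q * r = B 0 0 + (c * B 0 1 : ℤ) * r := by push_cast; linear_combination h0
  exact ⟨B 0 1, (hr.intCast_add_mul_inj this).2⟩

theorem multSet_one_quadratic_irrational {ω : ℝ} {D : ℤ} (hω : Irrational ω) (hωD : ω * ω = D) :
    MultSet ![1, ω] =
      {α | ∃ x y : ℤ, (x ^ 2 - D * y ^ 2 = 1 ∨ x ^ 2 - D * y ^ 2 = -1) ∧ α = x + y * ω} := by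
  ext α
  simp only [MultSet, Fin.forall_fin_two, Fin.sum_univ_two, Set.mem_ofPred_eq,
    cons_val_zero, cons_val_one, mul_one]
  constructor
  · rintro ⟨B, hdet, hα, hαω⟩
    have : ((D * B 0 1 : ℤ) : ℝ) + B 0 0 * ω = B 1 0 + B 1 1 * ω := by
      push_cast; linear_combination hαω - ω * hα - B 0 1 * hωD
    obtain ⟨h10, h11⟩ := hω.intCast_add_mul_inj this
    refine ⟨B 0 0, B 0 1, ?_, hα⟩
    rw [det_fin_two, ← h10, ← h11] at hdet
    obtain h | h := hdet <;> [left; right] <;> linear_combination h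
  · rintro ⟨x, y, hxy, rfl⟩
    refine ⟨!![x, y; D * y, x], ?_, by simp, ?_⟩
    · rw [det_fin_two_of]; convert hxy using 2 <;> ring
    · simp only [of_apply, cons_val', cons_val_zero, cons_val_fin_one, cons_val_one, Int.cast_mul]
      linear_combination y * hωD

namespace Pell

open Solution₁

variable {d : ℤ} {ω : ℝ}

theorem isFundamental_mk_y_one {x : ℤ} (hx : 1 < x) (h : x ^ 2 - d * 1 ^ 2 = 1) :
    IsFundamental (mk x 1 h) := by
  refine ⟨by simpa, by simp, fun {b} hb => ?_⟩
  have hy := b.y_ne_zero_of_one_lt_x hb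
  have hd : 0 < d := by nlinarith
  have hy2 : 1 ≤ b.y ^ 2 := by rw [← sq_abs]; exact one_le_pow₀ (Int.one_le_abs hy)
  have : x ^ 2 ≤ b.x ^ 2 := by rw [b.prop_x]; nlinarith
  simpa using (pow_le_pow_iff_left₀ (by omega) (by omega) two_ne_zero).mp this

noncomputable def Solution₁.toRealUnits (hω : ω * ω = d) : Solution₁ d →* ℝˣ :=
  (Units.map (Zsqrtd.lift ⟨ω, hω⟩ : ℤ√d →+* ℝ).toMonoidHom).comp Unitary.toUnits

theorem Solution₁.coe_toRealUnits (hω : ω * ω = d) (a : Solution₁ d) :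
    (toRealUnits hω a : ℝ) = a.x + a.y * ω :=
  rfl

theorem IsFundamental.setOf_eq {a₁ : Solution₁ d} (h : IsFundamental a₁) (hω : ω * ω = d) :
    {α : ℝ | ∃ x y : ℤ, x ^ 2 - d * y ^ 2 = 1 ∧ α = x + y * ω} =
      {α | ∃ ε : ℝ, (ε = 1 ∨ ε = -1) ∧ ∃ n : ℤ, α = ε * (a₁.x + a₁.y * ω) ^ n} := by
  have hneg (a : Solution₁ d) : (toRealUnits hω (-a) : ℝ) = -toRealUnits hω a := by
    simp only [coe_toRealUnits, x_neg, y_neg]; push_cast; ring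
  have hpow (n : ℤ) : (toRealUnits hω (a₁ ^ n) : ℝ) = (a₁.x + a₁.y * ω) ^ n := by
    rw [map_zpow, Units.val_zpow_eq_zpow_val, coe_toRealUnits]
  ext α
  constructor
  · rintro ⟨x, y, hxy, rfl⟩
    have hval := coe_toRealUnits hω (mk x y hxy)
    rw [x_mk, y_mk] at hval
    obtain ⟨n, ha | ha⟩ := h.eq_zpow_or_neg_zpow (mk x y hxy)
    · exact ⟨1, .inl rfl, n, by rw [← hval, ha, hpow, one_mul]⟩
    · exact ⟨-1, .inr rfl, n, by rw [← hval, ha, hneg, hpow, neg_one_mul]⟩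
  · rintro ⟨ε, hε | hε, n, rfl⟩
    · refine ⟨(a₁ ^ n).x, (a₁ ^ n).y, (a₁ ^ n).prop, ?_⟩
      rw [hε, one_mul, ← hpow, coe_toRealUnits]
    · refine ⟨(-a₁ ^ n).x, (-a₁ ^ n).y, (-a₁ ^ n).prop, ?_⟩
      rw [hε, neg_one_mul, ← hpow, ← hneg, coe_toRealUnits]

end Pell

theorem multSet_four_sixty_sqrt_three_eq : MultSet ![4, 60 * √3] = MultSet ![1, 15 * √3] := by
  rw [← multSet_smul four_ne_zero ![1, 15 * √3], smul_vec2, smul_eq_mul, smul_eq_mul]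
  congr 3 <;> ring

theorem multSet_four_sixty_sqrt_three : MultSet ![4, 60 * √3] =
    {α | ∃ ε : ℝ, (ε = 1 ∨ ε = -1) ∧ ∃ k : ℤ, α = ε * (2 + √3) ^ (3 * k)} := by
  have hsqrt : √3 * √3 = 3 := Real.mul_self_sqrt (by norm_num)
  have hω : 15 * √3 * (15 * √3) = ((675 : ℤ) : ℝ) := by
    push_cast; linear_combination 225 * hsqrt
  have hirr : Irrational (15 * √3) := by
    exact_mod_cast Nat.prime_three.irrational_sqrt.intCast_mul (m := 15) (by norm_num)
  have hunit : (2 + √3) ^ 3 = ((26 : ℤ) : ℝ) + ((1 : ℤ) : ℝ) * (15 * √3) := by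
    push_cast; linear_combination (6 + √3) * hsqrt
  have hfund := Pell.isFundamental_mk_y_one (d := 675) (x := 26) (by norm_num) (by norm_num)
  rw [multSet_four_sixty_sqrt_three_eq, multSet_one_quadratic_irrational hirr hω]
  simp only [Int.sq_sub_mul_sq_ne_neg_one_of_three_dvd (by norm_num : (3 : ℤ) ∣ 675), or_false]
  rw [hfund.setOf_eq hω]
  simp only [Pell.Solution₁.x_mk, Pell.Solution₁.y_mk, ← hunit, _root_.zpow_mul, zpow_ofNat]

/-- the counterexample to the uncorrected semiconjugacy theorem:
with `a = (1, 4√3)` and `d = (4, 60√3) = C · a` for `C = [[4,0],[0,15]]`,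
`(2+√3)³ ∈ M(d)` (witnessed by `[[26,1],[675,26]]` of determinant `1`),
neither `2+√3` nor `(2+√3)²` is in `M(d)`,
`M(d) = {±(2+√3)^(3k) : k ∈ ℤ}`, `(2+√3)³ ∉ M(a)`, and `M(d) ⊄ M(a)`. -/
theorem semiconjugacy_counterexample
    (a d : Fin 2 → ℝ) (hA : a = ![(1 : ℝ), 4 * Real.sqrt 3])
    (hD : d = ![(4 : ℝ), 60 * Real.sqrt 3])
    (C : Matrix (Fin 2) (Fin 2) ℤ) (hC : C = !![4, 0; 0, 15]) :
    C.det ≠ 0 ∧ (∀ i, d i = ∑ j, (C i j : ℝ) * a j) ∧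
    ((!![26, 1; 675, 26] : Matrix (Fin 2) (Fin 2) ℤ).det = 1 ∧
      ∀ i, (2 + Real.sqrt 3) ^ 3 * d i
        = ∑ j, ((!![26, 1; 675, 26] : Matrix (Fin 2) (Fin 2) ℤ) i j : ℝ) * d j) ∧
    (2 + Real.sqrt 3) ^ 3 ∈ MultSet d ∧
    (2 + Real.sqrt 3) ∉ MultSet d ∧
    (2 + Real.sqrt 3) ^ 2 ∉ MultSet d ∧
    MultSet d = {x : ℝ | ∃ ε : ℝ, (ε = 1 ∨ ε = -1) ∧
        ∃ k : ℤ, x = ε * (2 + Real.sqrt 3) ^ (3 * k)} ∧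
    (2 + Real.sqrt 3) ^ 3 ∉ MultSet a ∧
    ¬ MultSet d ⊆ MultSet a := by
  subst hA hD hC
  have hsqrt : √3 * √3 = 3 := Real.mul_self_sqrt (by norm_num)
  have hnot_mem {c p q : ℤ} (hcq : ¬c ∣ q) : (p + q * √3 : ℝ) ∉ MultSet ![1, c * √3] :=
    fun h => hcq (dvd_of_intCast_add_mul_mem_multSet Nat.prime_three.irrational_sqrt h)
  have hcube : (2 + √3) ^ 3 = 26 + 15 * √3 := by linear_combination (6 + √3) * hsqrt
  have hdet : (!![26, 1; 675, 26] : Matrix (Fin 2) (Fin 2) ℤ).det = 1 := by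
    simp [det_fin_two_of]
  have hmul : ∀ i, (2 + √3) ^ 3 * ![4, 60 * √3] i
      = ∑ j, ((!![26, 1; 675, 26] : Matrix (Fin 2) (Fin 2) ℤ) i j : ℝ) * ![4, 60 * √3] j := by
    simp only [hcube, Fin.forall_fin_two, Fin.sum_univ_two, of_apply, cons_val', cons_val_fin_one,
      cons_val_zero, cons_val_one]
    push_cast
    exact ⟨by ring, by linear_combination 900 * hsqrt⟩
  have hmem : (2 + √3) ^ 3 ∈ MultSet ![4, 60 * √3] := ⟨_, .inl hdet, hmul⟩
  have hnot_mem_a : (2 + √3) ^ 3 ∉ MultSet ![1, 4 * √3] := by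
    rw [hcube]
    exact_mod_cast hnot_mem (c := 4) (p := 26) (q := 15) (by decide)
  refine ⟨by simp [det_fin_two_of], ?_, ⟨hdet, hmul⟩, hmem, ?_, ?_, multSet_four_sixty_sqrt_three,
    hnot_mem_a, fun h => hnot_mem_a (h hmem)⟩
  · simp only [Fin.forall_fin_two, Fin.sum_univ_two, of_apply, cons_val', cons_val_fin_one,
      cons_val_zero, cons_val_one]
    push_cast
    constructor <;> ring
  · rw [multSet_four_sixty_sqrt_three_eq]
    simpa using hnot_mem (c := 15) (p := 2) (q := 1) (by decide)
  · rw [multSet_four_sixty_sqrt_three_eq, show (2 + √3) ^ 2 = 7 + 4 * √3 by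
      linear_combination hsqrt]
    exact_mod_cast hnot_mem (c := 15) (p := 7) (q := 4) (by decide)
end
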